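/- Let b_n be the number of ordered partitions of [n] with all left-to-right minima at odd locations. Then (∑ b_n x^n/n!)^2 · (2 - e^x) = e^x, i.e., for all n ≥ 1, 2·∑_{k=0}^{n} C(n,k) b_k b_{n-k} - ∑_{m=0}^{n} C(n,m) ∑_{k=0}^{m} C(m,k) b_k b_{m-k} = 1. -/

import Mathlib

def prefixUnion (n : ℕ) (L : List (Finset (Fin n))) (i : ℕ) : Finset (Fin n) :=
  (L.take (i + 1)).foldr (· ∪ ·) ∅

def IsOP (n : ℕ) (L : List (Finset (Fin n))) : Prop :=
  (∀ A ∈ L, A.Nonempty) ∧ L.Pairwise Disjoint ∧ L.foldr (· ∪ ·) ∅ = Finset.univ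

def OddMinima (n : ℕ) (L : List (Finset (Fin n))) : Prop :=
  ∀ i, i < L.length → ∀ m : Fin n,
    (m ∈ prefixUnion n L i ∧ ∀ x ∈ prefixUnion n L i, m ≤ x) →
    ∃ j, ∃ hj : j < L.length, Even j ∧ m ∈ L.get ⟨j, hj⟩

/-- The number of ordered partitions of `[n]` all of whose left-to-right
minima occur at odd locations (`bseq 0 = 1`). -/
noncomputable def bseq (n : ℕ) : ℕ :=
  Nat.card {L : List (Finset (Fin n)) // IsOP n L ∧ OddMinima n L}

def IsOPOn (n : ℕ) (S : Finset (Fin n)) (L : List (Finset (Fin n))) : Prop :=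
  (∀ A ∈ L, A.Nonempty) ∧ L.Pairwise Disjoint ∧ L.foldr (· ∪ ·) ∅ = S

lemma mem_foldrUnion {n : ℕ} {L : List (Finset (Fin n))} {a : Fin n} :
    a ∈ L.foldr (· ∪ ·) ∅ ↔ ∃ B ∈ L, a ∈ B := by
  induction L with
  | nil => simp
  | cons B T ih => simp [ih]

lemma subset_foldrUnion {n : ℕ} {L : List (Finset (Fin n))} {B : Finset (Fin n)}
    (h : B ∈ L) : B ⊆ L.foldr (· ∪ ·) ∅ := fun a ha => mem_foldrUnion.mpr ⟨B, h, ha⟩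

lemma length_le_card {n : ℕ} {L : List (Finset (Fin n))}
    (h1 : ∀ A ∈ L, A.Nonempty) (h2 : L.Pairwise Disjoint) :
    L.length ≤ (L.foldr (· ∪ ·) ∅).card := by
  induction L with
  | nil => simp
  | cons B T ih =>
    rw [List.foldr_cons, List.length_cons]
    have hBd : ∀ C ∈ T, Disjoint B C := (List.pairwise_cons.mp h2).1
    have hd : Disjoint B (T.foldr (· ∪ ·) ∅) := by
      rw [Finset.disjoint_left]
      intro a haB haT
      obtain ⟨C, hC, haC⟩ := mem_foldrUnion.mp haT
      exact (Finset.disjoint_left.mp (hBd C hC)) haB haC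
    rw [Finset.card_union_of_disjoint hd]
    have h3 := ih (fun A hA => h1 A (List.mem_cons_of_mem _ hA)) (List.pairwise_cons.mp h2).2
    have hB : 1 ≤ B.card := Finset.card_pos.mpr (h1 B (List.mem_cons_self))
    omega

instance fintypeOP (n : ℕ) (S : Finset (Fin n)) (p : ℕ → Prop) :
    Finite {L : List (Finset (Fin n)) // IsOPOn n S L ∧ OddMinima n L ∧ p L.length} := by
  have hfin : {l : List (Finset (Fin n)) | l.length ≤ n}.Finite := List.finite_length_le _ _
  have h : {L : List (Finset (Fin n)) | IsOPOn n S L ∧ OddMinima n L ∧ p L.length}.Finite := by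
    apply hfin.subset
    intro L hL
    have := length_le_card hL.1.1 hL.1.2.1
    rw [hL.1.2.2] at this
    simp only [Set.mem_setOf_eq]
    exact this.trans ((S.card_le_univ).trans (by simp))
  exact h.to_subtype
section relabel

variable {n m : ℕ} (f : Fin m ↪o Fin n)

def Fmap (f : Fin m ↪o Fin n) : Finset (Fin m) → Finset (Fin n) :=
  fun B => B.map f.toEmbedding

lemma Fmap_union (B C : Finset (Fin m)) : Fmap f (B ∪ C) = Fmap f B ∪ Fmap f C :=
  Finset.map_union _ _

lemma foldr_map (M : List (Finset (Fin m))) :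
    (M.map (Fmap f)).foldr (· ∪ ·) ∅ = Fmap f (M.foldr (· ∪ ·) ∅) := by
  induction M with
  | nil => simp [Fmap]
  | cons B T ih => simp [ih, Fmap_union]

lemma prefixUnion_map (M : List (Finset (Fin m))) (i : ℕ) :
    prefixUnion n (M.map (Fmap f)) i = Fmap f (prefixUnion m M i) := by
  unfold prefixUnion
  rw [← List.map_take, foldr_map]

lemma mem_Fmap {B : Finset (Fin m)} {x : Fin n} :
    x ∈ Fmap f B ↔ ∃ y ∈ B, f y = x := by
  simp [Fmap]

lemma isOPOn_map {S : Finset (Fin n)} (hS : Finset.univ.map f.toEmbedding = S)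
    (M : List (Finset (Fin m))) :
    IsOPOn n S (M.map (Fmap f)) ↔ IsOPOn m Finset.univ M := by
  constructor
  · rintro ⟨h1, h2, h3⟩
    refine ⟨?_, ?_, ?_⟩
    · intro A hA
      have := h1 (Fmap f A) (List.mem_map_of_mem hA)
      rwa [Fmap, Finset.map_nonempty] at this
    · rw [List.pairwise_map] at h2
      exact h2.imp (fun h => by rwa [Fmap, Fmap, Finset.disjoint_map] at h)
    · rw [foldr_map] at h3
      apply Finset.map_injective f.toEmbedding
      show Fmap f _ = _
      rw [h3, hS]
  · rintro ⟨h1, h2, h3⟩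
    refine ⟨?_, ?_, ?_⟩
    · intro A hA
      obtain ⟨B, hB, rfl⟩ := List.mem_map.mp hA
      exact (h1 B hB).map
    · rw [List.pairwise_map]
      exact h2.imp (fun h => by rw [Fmap, Fmap, Finset.disjoint_map]; exact h)
    · rw [foldr_map, h3, ← hS]; rfl

lemma oddMinima_map (M : List (Finset (Fin m))) :
    OddMinima n (M.map (Fmap f)) ↔ OddMinima m M := by
  constructor
  · intro h i hi mm ⟨hm1, hm2⟩
    have hi' : i < (M.map (Fmap f)).length := by simpa using hi
    obtain ⟨j, hj, hje, hjm⟩ := h i hi' (f mm) ⟨by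
        rw [prefixUnion_map]; exact mem_Fmap f |>.mpr ⟨mm, hm1, rfl⟩, by
      intro x hx
      rw [prefixUnion_map] at hx
      obtain ⟨y, hy, rfl⟩ := mem_Fmap f |>.mp hx
      exact f.le_iff_le.mpr (hm2 y hy)⟩
    have hj' : j < M.length := by simpa using hj
    refine ⟨j, hj', hje, ?_⟩
    simp only [List.get_eq_getElem, List.getElem_map] at hjm
    obtain ⟨y, hy, hfy⟩ := mem_Fmap f |>.mp hjm
    rwa [← f.injective hfy]
  · intro h i hi mm ⟨hm1, hm2⟩
    have hi' : i < M.length := by simpa using hi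
    rw [prefixUnion_map] at hm1
    obtain ⟨y, hy, rfl⟩ := mem_Fmap f |>.mp hm1
    obtain ⟨j, hj, hje, hjm⟩ := h i hi' y ⟨hy, by
      intro x hx
      have : f y ≤ f x := hm2 (f x) (by rw [prefixUnion_map]; exact mem_Fmap f |>.mpr ⟨x, hx, rfl⟩)
      exact f.le_iff_le.mp this⟩
    refine ⟨j, by simpa using hj, hje, ?_⟩
    simp only [List.get_eq_getElem, List.getElem_map]
    exact mem_Fmap f |>.mpr ⟨_, hjm, rfl⟩

end relabel

section relabel2

variable {n m : ℕ} (f : Fin m ↪o Fin n)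

noncomputable def gmap (f : Fin m ↪o Fin n) : Finset (Fin n) → Finset (Fin m) :=
  fun B => B.preimage f (Set.injOn_of_injective f.injective)

lemma gmap_Fmap (C : Finset (Fin m)) : gmap f (Fmap f C) = C := by
  ext y
  simp [gmap, Fmap, Finset.mem_preimage, f.injective.eq_iff]

lemma Fmap_gmap {B : Finset (Fin n)} (hB : B ⊆ Finset.univ.map f.toEmbedding) :
    Fmap f (gmap f B) = B := by
  ext x
  simp only [mem_Fmap, gmap, Finset.mem_preimage]
  constructor
  · rintro ⟨y, hy, rfl⟩; exact hy
  · intro hx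
    obtain ⟨y, -, rfl⟩ := Finset.mem_map.mp (hB hx)
    exact ⟨y, hx, rfl⟩

noncomputable def cntP (n : ℕ) (S : Finset (Fin n)) (p : ℕ → Prop) : ℕ :=
  Nat.card {L : List (Finset (Fin n)) // IsOPOn n S L ∧ OddMinima n L ∧ p L.length}

noncomputable def relabelEquiv {S : Finset (Fin n)} (hS : Finset.univ.map f.toEmbedding = S)
    (p : ℕ → Prop) :
    {M : List (Finset (Fin m)) // IsOPOn m Finset.univ M ∧ OddMinima m M ∧ p M.length} ≃
    {L : List (Finset (Fin n)) // IsOPOn n S L ∧ OddMinima n L ∧ p L.length} where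
  toFun M := ⟨M.1.map (Fmap f), (isOPOn_map f hS _).mpr M.2.1, (oddMinima_map f _).mpr M.2.2.1,
    by simpa using M.2.2.2⟩
  invFun L := by
    refine ⟨L.1.map (gmap f), ?_⟩
    have hmap : (L.1.map (gmap f)).map (Fmap f) = L.1 := by
      rw [List.map_map]
      conv_rhs => rw [← List.map_id L.1]
      apply List.map_congr_left
      intro B hB
      have hBS : B ⊆ S := by
        rw [← L.2.1.2.2]
        exact fun a ha => mem_foldrUnion.mpr ⟨B, hB, ha⟩
      exact Fmap_gmap f (by rw [hS]; exact hBS)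
    refine ⟨(isOPOn_map f hS _).mp (by rw [hmap]; exact L.2.1),
      (oddMinima_map f _).mp (by rw [hmap]; exact L.2.2.1), ?_⟩
    have : (L.1.map (gmap f)).length = L.1.length := by simp
    rw [this]; exact L.2.2.2
  left_inv M := by
    apply Subtype.ext
    simp only
    rw [List.map_map]
    conv_rhs => rw [← List.map_id M.1]
    exact List.map_congr_left (fun C _ => gmap_Fmap f C)
  right_inv L := by
    apply Subtype.ext
    simp only
    rw [List.map_map]
    conv_rhs => rw [← List.map_id L.1]
    apply List.map_congr_left
    intro B hB
    have hBS : B ⊆ S := by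
      rw [← L.2.1.2.2]
      exact fun a ha => mem_foldrUnion.mpr ⟨B, hB, ha⟩
    exact Fmap_gmap f (by rw [hS]; exact hBS)

lemma relabel (n : ℕ) (S : Finset (Fin n)) (p : ℕ → Prop) :
    cntP n S p = cntP S.card Finset.univ p := by
  classical
  set m := S.card with hm
  let e : Fin m ≃o {x // x ∈ S} := S.orderIsoOfFin rfl
  let f : Fin m ↪o Fin n := e.toOrderEmbedding.trans (OrderEmbedding.subtype _)
  have hS : Finset.univ.map f.toEmbedding = S := by
    ext x
    simp only [Finset.mem_map]
    constructor
    · rintro ⟨y, -, rfl⟩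
      exact (e y).2
    · intro hx
      exact ⟨e.symm ⟨x, hx⟩, Finset.mem_univ _, by simp [f]⟩
  exact (Nat.card_congr (relabelEquiv f hS p)).symm

end relabel2
section dec

variable {n : ℕ}

lemma foldr_append_single (M : List (Finset (Fin n))) (A : Finset (Fin n)) :
    (M ++ [A]).foldr (· ∪ ·) ∅ = M.foldr (· ∪ ·) ∅ ∪ A := by
  ext x
  simp only [mem_foldrUnion, List.mem_append, List.mem_singleton, Finset.mem_union]
  constructor
  · rintro ⟨B, hB | rfl, hx⟩
    · exact Or.inl ⟨B, hB, hx⟩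
    · exact Or.inr hx
  · rintro (⟨B, hB, hx⟩ | hx)
    · exact ⟨B, Or.inl hB, hx⟩
    · exact ⟨A, Or.inr rfl, hx⟩

lemma isOPOn_append {M : List (Finset (Fin n))} {A : Finset (Fin n)} :
    IsOPOn n Finset.univ (M ++ [A]) ↔ A.Nonempty ∧ IsOPOn n (Finset.univ \ A) M := by
  constructor
  · rintro ⟨h1, h2, h3⟩
    rw [List.pairwise_append] at h2
    have hd : ∀ B ∈ M, Disjoint B A := fun B hB => h2.2.2 B hB A (List.mem_singleton_self A)
    rw [foldr_append_single] at h3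
    refine ⟨h1 A (by simp), fun B hB => h1 B (by simp [hB]), h2.1, ?_⟩
    ext x
    simp only [Finset.mem_sdiff, Finset.mem_univ, true_and]
    constructor
    · intro hx
      obtain ⟨B, hB, hxB⟩ := mem_foldrUnion.mp hx
      exact fun hxA => Finset.disjoint_left.mp (hd B hB) hxB hxA
    · intro hxA
      have : x ∈ M.foldr (· ∪ ·) ∅ ∪ A := h3 ▸ Finset.mem_univ x
      rcases Finset.mem_union.mp this with h | h
      · exact h
      · exact absurd h hxA
  · rintro ⟨hA, h1, h2, h3⟩
    have hd : ∀ B ∈ M, Disjoint B A := by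
      intro B hB
      have hBsub : B ⊆ Finset.univ \ A := h3 ▸ fun a ha => mem_foldrUnion.mpr ⟨B, hB, ha⟩
      exact Finset.disjoint_left.mpr fun a haB haA =>
        (Finset.mem_sdiff.mp (hBsub haB)).2 haA
    refine ⟨?_, ?_, ?_⟩
    · intro B hB
      rcases List.mem_append.mp hB with h | h
      · exact h1 B h
      · rwa [List.mem_singleton.mp h]
    · rw [List.pairwise_append]
      exact ⟨h2, List.pairwise_singleton _ _,
        fun B hB C hC => (List.mem_singleton.mp hC) ▸ hd B hB⟩
    · rw [foldr_append_single, h3, Finset.sdiff_union_of_subset (Finset.subset_univ A)]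

lemma prefixUnion_append_lt {M : List (Finset (Fin n))} {A : Finset (Fin n)} {i : ℕ}
    (hi : i < M.length) :
    prefixUnion n (M ++ [A]) i = prefixUnion n M i := by
  unfold prefixUnion
  rw [List.take_append_of_le_length hi]

lemma prefixUnion_append_last {M : List (Finset (Fin n))} {A : Finset (Fin n)} :
    prefixUnion n (M ++ [A]) M.length = (M ++ [A]).foldr (· ∪ ·) ∅ := by
  unfold prefixUnion
  rw [List.take_of_length_le (by simp)]

lemma prefixUnion_last {M : List (Finset (Fin n))} (h : M ≠ []) :
    prefixUnion n M (M.length - 1) = M.foldr (· ∪ ·) ∅ := by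
  unfold prefixUnion
  rw [List.take_of_length_le (by have := List.length_pos_iff.mpr h; omega)]

lemma prefixUnion_subset {M : List (Finset (Fin n))} (i : ℕ) :
    prefixUnion n M i ⊆ M.foldr (· ∪ ·) ∅ := by
  intro a ha
  obtain ⟨B, hB, haB⟩ := mem_foldrUnion.mp ha
  exact mem_foldrUnion.mpr ⟨B, List.take_subset _ _ hB, haB⟩

lemma oddMinima_append (hn : 0 < n) {M : List (Finset (Fin n))} {A : Finset (Fin n)}
    (hM : IsOPOn n (Finset.univ \ A) M) (hcov : (M ++ [A]).foldr (· ∪ ·) ∅ = Finset.univ) :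
    OddMinima n (M ++ [A]) ↔
      OddMinima n M ∧ ((⟨0, hn⟩ : Fin n) ∈ A → Even M.length) := by
  have hlen : (M ++ [A]).length = M.length + 1 := by simp
  have hzle : ∀ x : Fin n, (⟨0, hn⟩ : Fin n) ≤ x := fun x => Fin.mk_le_of_le_val (Nat.zero_le _)
  constructor
  · intro h
    constructor
    · intro i hi m hm
      have hm2 : m ∈ prefixUnion n (M ++ [A]) i ∧ ∀ x ∈ prefixUnion n (M ++ [A]) i, m ≤ x := by
        rw [prefixUnion_append_lt hi]; exact hm
      obtain ⟨j, hj, hje, hjm⟩ := h i (by omega) m hm2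
      have hmA : m ∉ A := by
        have : m ∈ Finset.univ \ A := hM.2.2 ▸ prefixUnion_subset i hm.1
        exact (Finset.mem_sdiff.mp this).2
      have hjlt : j < M.length := by
        rcases Nat.lt_or_ge j M.length with h' | h'
        · exact h'
        · exfalso
          have hj' : j = M.length := by rw [hlen] at hj; omega
          subst hj'
          apply hmA
          have : (M ++ [A]).get ⟨M.length, hj⟩ = A := by
            simp [List.getElem_append_right (Nat.le_refl M.length)]
          rwa [this] at hjm
      refine ⟨j, hjlt, hje, ?_⟩
      have : (M ++ [A]).get ⟨j, hj⟩ = M.get ⟨j, hjlt⟩ := by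
        simp [List.getElem_append_left hjlt]
      rwa [this] at hjm
    · intro h0A
      obtain ⟨j, hj, hje, hjm⟩ := h M.length (by omega) ⟨0, hn⟩
        ⟨by rw [prefixUnion_append_last, hcov]; exact Finset.mem_univ _,
         by intro x _; exact hzle x⟩
      have hjeq : j = M.length := by
        rcases Nat.lt_or_ge j M.length with h' | h'
        · exfalso
          have : (M ++ [A]).get ⟨j, hj⟩ = M.get ⟨j, h'⟩ := by
            simp [List.getElem_append_left h']
          rw [this] at hjm
          have : (⟨0, hn⟩ : Fin n) ∈ Finset.univ \ A :=
            hM.2.2 ▸ mem_foldrUnion.mpr ⟨_, List.get_mem M _, hjm⟩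
          exact (Finset.mem_sdiff.mp this).2 h0A
        · rw [hlen] at hj; omega
      rwa [hjeq] at hje
  · rintro ⟨hOM, hpar⟩
    intro i hi m hm
    rcases Nat.lt_or_ge i M.length with hilt | hige
    · rw [prefixUnion_append_lt hilt] at hm
      obtain ⟨j, hj, hje, hjm⟩ := hOM i hilt m hm
      refine ⟨j, by omega, hje, ?_⟩
      have : (M ++ [A]).get ⟨j, by omega⟩ = M.get ⟨j, hj⟩ := by
        simp [List.getElem_append_left hj]
      rwa [this]
    · have hieq : i = M.length := by rw [hlen] at hi; omega
      subst hieq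
      rw [prefixUnion_append_last, hcov] at hm
      have hmem : m ∈ M.foldr (· ∪ ·) ∅ ∪ A := by
        rw [← foldr_append_single, hcov]; exact Finset.mem_univ m
      rcases Finset.mem_union.mp hmem with hmM | hmA
      · have hMne : M ≠ [] := by
          rintro rfl
          simp at hmM
        have hm' : m ∈ prefixUnion n M (M.length - 1) ∧
            ∀ x ∈ prefixUnion n M (M.length - 1), m ≤ x := by
          rw [prefixUnion_last hMne]
          exact ⟨hmM, fun x _ => hm.2 x (Finset.mem_univ x)⟩
        obtain ⟨j, hj, hje, hjm⟩ := hOM (M.length - 1)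
          (by have := List.length_pos_iff.mpr hMne; omega) m hm'
        refine ⟨j, by omega, hje, ?_⟩
        have : (M ++ [A]).get ⟨j, by omega⟩ = M.get ⟨j, hj⟩ := by
          simp [List.getElem_append_left hj]
        rwa [this]
      · have hmz : m = ⟨0, hn⟩ := le_antisymm (hm.2 _ (Finset.mem_univ _)) (hzle m)
        have heven := hpar (hmz ▸ hmA)
        refine ⟨M.length, by omega, heven, ?_⟩
        have : (M ++ [A]).get ⟨M.length, by omega⟩ = A := by
          simp [List.getElem_append_right (Nat.le_refl M.length)]
        rwa [this]

end dec


noncomputable def eseq (m : ℕ) : ℕ := cntP m Finset.univ Even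
noncomputable def oseq (m : ℕ) : ℕ := cntP m Finset.univ Odd

section count

lemma nat_card_sigma {ι : Type*} [Fintype ι] (π : ι → Type*) [h : ∀ i, Finite (π i)] :
    Nat.card (Σ i, π i) = ∑ i, Nat.card (π i) := by
  classical
  letI : ∀ i, Fintype (π i) := fun i => Fintype.ofFinite _
  simp [Nat.card_eq_fintype_card, Fintype.card_sigma]

variable {n : ℕ}

lemma oddEven_split (n : ℕ) : bseq n = eseq n + oseq n := by
  classical
  have e1 : {L : List (Finset (Fin n)) // IsOP n L ∧ OddMinima n L} ≃
      {L : {L : List (Finset (Fin n)) // IsOP n L ∧ OddMinima n L} // Even L.1.length} ⊕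
      {L : {L : List (Finset (Fin n)) // IsOP n L ∧ OddMinima n L} // ¬ Even L.1.length} :=
    (Equiv.sumCompl _).symm
  have e2 : {L : {L : List (Finset (Fin n)) // IsOP n L ∧ OddMinima n L} // Even L.1.length} ≃
      {L : List (Finset (Fin n)) // IsOPOn n Finset.univ L ∧ OddMinima n L ∧ Even L.length} :=
    (Equiv.subtypeSubtypeEquivSubtypeInter _ _).trans
      (Equiv.subtypeEquivRight (fun L => by
        show (IsOP n L ∧ OddMinima n L) ∧ Even L.length ↔
          IsOPOn n Finset.univ L ∧ OddMinima n L ∧ Even L.length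
        unfold IsOP IsOPOn
        tauto))
  have e3 : {L : {L : List (Finset (Fin n)) // IsOP n L ∧ OddMinima n L} // ¬ Even L.1.length} ≃
      {L : List (Finset (Fin n)) // IsOPOn n Finset.univ L ∧ OddMinima n L ∧ Odd L.length} :=
    (Equiv.subtypeSubtypeEquivSubtypeInter _ _).trans
      (Equiv.subtypeEquivRight (fun L => by
        show (IsOP n L ∧ OddMinima n L) ∧ ¬ Even L.length ↔
          IsOPOn n Finset.univ L ∧ OddMinima n L ∧ Odd L.length
        rw [Nat.not_even_iff_odd]
        unfold IsOP IsOPOn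
        tauto))
  rw [bseq, Nat.card_congr (e1.trans (Equiv.sumCongr e2 e3)), Nat.card_sum]
  rfl

lemma eseq_zero : eseq 0 = 1 := by
  have : Unique {L : List (Finset (Fin 0)) // IsOPOn 0 Finset.univ L ∧ OddMinima 0 L ∧
      Even L.length} := by
    refine ⟨⟨⟨[], ⟨by simp, by simp, by simp⟩, fun i hi => by simp at hi, by simp⟩⟩, ?_⟩
    rintro ⟨L, hL⟩
    apply Subtype.ext
    show L = []
    cases L with
    | nil => rfl
    | cons B T =>
      obtain ⟨x, hx⟩ := hL.1.1 B (List.mem_cons_self)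
      exact absurd x.isLt (by omega)
  exact Nat.card_unique

lemma oseq_zero : oseq 0 = 0 := by
  have : IsEmpty {L : List (Finset (Fin 0)) // IsOPOn 0 Finset.univ L ∧ OddMinima 0 L ∧
      Odd L.length} := by
    refine ⟨fun ⟨L, hL⟩ => ?_⟩
    cases L with
    | nil => simp [Nat.odd_iff] at hL
    | cons B T =>
      obtain ⟨x, hx⟩ := hL.1.1 B (List.mem_cons_self)
      exact absurd x.isLt (by omega)
  exact Nat.card_of_isEmpty

lemma phi_odd_bijective (hn : 0 < n) :
    ∃ Φ : (Σ A : {A : Finset (Fin n) // A.Nonempty},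
      {M : List (Finset (Fin n)) //
        IsOPOn n (Finset.univ \ A.1) M ∧ OddMinima n M ∧ Even M.length}) →
      {L : List (Finset (Fin n)) //
        IsOPOn n Finset.univ L ∧ OddMinima n L ∧ Odd L.length},
      Function.Bijective Φ := by
  classical
  refine ⟨fun x => ⟨x.2.1 ++ [x.1.1], ?_⟩, ?_, ?_⟩
  · obtain ⟨⟨A, hA⟩, ⟨M, hM, hOM, hpar⟩⟩ := x
    have hOP : IsOPOn n Finset.univ (M ++ [A]) := isOPOn_append.mpr ⟨hA, hM⟩
    exact ⟨hOP, (oddMinima_append hn hM hOP.2.2).mpr ⟨hOM, fun _ => hpar⟩,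
      by simpa using hpar.add_one⟩
  · rintro ⟨⟨A, hA⟩, ⟨M, hM⟩⟩ ⟨⟨A', hA'⟩, ⟨M', hM'⟩⟩ heq
    have h := Subtype.ext_iff.mp heq
    simp only at h
    obtain ⟨h1, h2⟩ := List.append_inj' h (by simp)
    have hAA : A = A' := by simpa using h2
    subst hAA
    subst h1
    rfl
  · rintro ⟨L, hOP, hOM, hodd⟩
    have hne : L ≠ [] := by
      rintro rfl
      simp [Nat.odd_iff] at hodd
    have hsplit : L.dropLast ++ [L.getLast hne] = L := List.dropLast_append_getLast hne
    have hOP' : IsOPOn n Finset.univ (L.dropLast ++ [L.getLast hne]) := by rwa [hsplit]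
    have hdec := isOPOn_append.mp hOP'
    have hOM' := (oddMinima_append hn hdec.2 hOP'.2.2).mp (by rwa [hsplit])
    have hlen : Even L.dropLast.length := by
      have h1 : L.dropLast.length = L.length - 1 := by simp
      have h2 := List.length_pos_iff.mpr hne
      rw [Nat.odd_iff] at hodd
      rw [Nat.even_iff]
      omega
    exact ⟨⟨⟨L.getLast hne, hdec.1⟩, ⟨L.dropLast, hdec.2, hOM'.1, hlen⟩⟩, Subtype.ext hsplit⟩

lemma phi_even_bijective (hn : 0 < n) :
    ∃ Φ : (Σ A : {A : Finset (Fin n) // A.Nonempty ∧ (⟨0, hn⟩ : Fin n) ∉ A},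
      {M : List (Finset (Fin n)) //
        IsOPOn n (Finset.univ \ A.1) M ∧ OddMinima n M ∧ Odd M.length}) →
      {L : List (Finset (Fin n)) //
        IsOPOn n Finset.univ L ∧ OddMinima n L ∧ Even L.length},
      Function.Bijective Φ := by
  classical
  refine ⟨fun x => ⟨x.2.1 ++ [x.1.1], ?_⟩, ?_, ?_⟩
  · obtain ⟨⟨A, hA, hz⟩, ⟨M, hM, hOM, hpar⟩⟩ := x
    have hOP : IsOPOn n Finset.univ (M ++ [A]) := isOPOn_append.mpr ⟨hA, hM⟩
    exact ⟨hOP, (oddMinima_append hn hM hOP.2.2).mpr ⟨hOM, fun h => absurd h hz⟩,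
      by simpa using hpar.add_one⟩
  · rintro ⟨⟨A, hA⟩, ⟨M, hM⟩⟩ ⟨⟨A', hA'⟩, ⟨M', hM'⟩⟩ heq
    have h := Subtype.ext_iff.mp heq
    simp only at h
    obtain ⟨h1, h2⟩ := List.append_inj' h (by simp)
    have hAA : A = A' := by simpa using h2
    subst hAA
    subst h1
    rfl
  · rintro ⟨L, hOP, hOM, heven⟩
    have hne : L ≠ [] := by
      rintro rfl
      have h := hOP.2.2
      rw [List.foldr_nil] at h
      have : (⟨0, hn⟩ : Fin n) ∈ (∅ : Finset (Fin n)) := by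
        rw [h]; exact Finset.mem_univ _
      simp at this
    have hsplit : L.dropLast ++ [L.getLast hne] = L := List.dropLast_append_getLast hne
    have hOP' : IsOPOn n Finset.univ (L.dropLast ++ [L.getLast hne]) := by rwa [hsplit]
    have hdec := isOPOn_append.mp hOP'
    have hOM' := (oddMinima_append hn hdec.2 hOP'.2.2).mp (by rwa [hsplit])
    have hlen : Odd L.dropLast.length := by
      have h1 : L.dropLast.length = L.length - 1 := by simp
      have h2 := List.length_pos_iff.mpr hne
      rw [Nat.even_iff] at heven
      rw [Nat.odd_iff]
      omega
    have hz : (⟨0, hn⟩ : Fin n) ∉ L.getLast hne := by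
      intro h0
      have := hOM'.2 h0
      rw [Nat.even_iff] at this
      rw [Nat.odd_iff] at hlen
      omega
    exact ⟨⟨⟨L.getLast hne, hdec.1, hz⟩, ⟨L.dropLast, hdec.2, hOM'.1, hlen⟩⟩,
      Subtype.ext hsplit⟩

lemma oseq_rec (hn : 0 < n) :
    oseq n + eseq n = ∑ s ∈ Finset.range (n + 1), n.choose s * eseq (n - s) := by
  classical
  obtain ⟨Φ, hΦ⟩ := phi_odd_bijective hn
  have h1 : oseq n = ∑ A : {A : Finset (Fin n) // A.Nonempty}, eseq (n - A.1.card) := by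
    rw [oseq, cntP, Nat.card_congr (Equiv.ofBijective Φ hΦ).symm, nat_card_sigma]
    refine Finset.sum_congr rfl fun A _ => ?_
    show cntP n (Finset.univ \ A.1) Even = _
    rw [relabel, Finset.card_sdiff_of_subset (Finset.subset_univ _), Finset.card_univ, Fintype.card_fin]
    rfl
  have h2 : ∑ A : {A : Finset (Fin n) // A.Nonempty}, eseq (n - A.1.card)
      = ∑ A ∈ Finset.univ.filter (fun A : Finset (Fin n) => A.Nonempty),
          eseq (n - A.card) :=
    (Finset.sum_subtype (Finset.univ.filter fun A : Finset (Fin n) => A.Nonempty)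
      (fun A => by simp) fun A => eseq (n - A.card)).symm
  have h3 : (∑ A ∈ Finset.univ.filter (fun A : Finset (Fin n) => A.Nonempty),
        eseq (n - A.card)) +
      (∑ A ∈ Finset.univ.filter (fun A : Finset (Fin n) => ¬ A.Nonempty),
        eseq (n - A.card)) = ∑ A : Finset (Fin n), eseq (n - A.card) :=
    Finset.sum_filter_add_sum_filter_not Finset.univ _ _
  have h3b : ∑ A ∈ Finset.univ.filter (fun A : Finset (Fin n) => ¬ A.Nonempty),
      eseq (n - A.card) = eseq n := by
    have he : Finset.univ.filter (fun A : Finset (Fin n) => ¬ A.Nonempty) = {∅} := by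
      ext A
      simp [Finset.not_nonempty_iff_eq_empty]
    rw [he, Finset.sum_singleton]
    simp
  have h4 : ∑ A : Finset (Fin n), eseq (n - A.card)
      = ∑ s ∈ Finset.range (n + 1), n.choose s * eseq (n - s) := by
    have := Finset.sum_powerset_apply_card (fun s => eseq (n - s))
      (x := (Finset.univ : Finset (Fin n)))
    rw [Finset.powerset_univ] at this
    simpa [Finset.card_univ, smul_eq_mul] using this
  omega

lemma eseq_rec (hn : 0 < n) :
    eseq n + oseq n = ∑ s ∈ Finset.range n, (n - 1).choose s * oseq (n - s) := by
  classical
  set z : Fin n := ⟨0, hn⟩ with hz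
  obtain ⟨Φ, hΦ⟩ := phi_even_bijective hn
  set T : Finset (Fin n) := Finset.univ.erase z with hT
  have h1 : eseq n = ∑ A : {A : Finset (Fin n) // A.Nonempty ∧ z ∉ A},
      oseq (n - A.1.card) := by
    rw [eseq, cntP, Nat.card_congr (Equiv.ofBijective Φ hΦ).symm, nat_card_sigma]
    refine Finset.sum_congr rfl fun A _ => ?_
    show cntP n (Finset.univ \ A.1) Odd = _
    rw [relabel, Finset.card_sdiff_of_subset (Finset.subset_univ _), Finset.card_univ, Fintype.card_fin]
    rfl
  have h2 : ∑ A : {A : Finset (Fin n) // A.Nonempty ∧ z ∉ A}, oseq (n - A.1.card)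
      = ∑ A ∈ T.powerset.filter (fun A : Finset (Fin n) => A.Nonempty),
          oseq (n - A.card) :=
    (Finset.sum_subtype (T.powerset.filter fun A : Finset (Fin n) => A.Nonempty)
      (fun A => by
        simp only [Finset.mem_filter, Finset.mem_powerset, hT,
          Finset.subset_erase, Finset.subset_univ, true_and]
        tauto)
      fun A => oseq (n - A.card)).symm
  have h3 : (∑ A ∈ T.powerset.filter (fun A : Finset (Fin n) => A.Nonempty),
        oseq (n - A.card)) +
      (∑ A ∈ T.powerset.filter (fun A : Finset (Fin n) => ¬ A.Nonempty),
        oseq (n - A.card)) = ∑ A ∈ T.powerset, oseq (n - A.card) :=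
    Finset.sum_filter_add_sum_filter_not T.powerset _ _
  have h3b : ∑ A ∈ T.powerset.filter (fun A : Finset (Fin n) => ¬ A.Nonempty),
      oseq (n - A.card) = oseq n := by
    have he : T.powerset.filter (fun A : Finset (Fin n) => ¬ A.Nonempty) = {∅} := by
      ext A
      simp only [Finset.mem_filter, Finset.mem_powerset, Finset.not_nonempty_iff_eq_empty,
        Finset.mem_singleton]
      constructor
      · rintro ⟨-, h⟩; exact h
      · rintro rfl; exact ⟨Finset.empty_subset _, rfl⟩
    rw [he, Finset.sum_singleton]
    simp
  have hTcard : T.card = n - 1 := by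
    rw [hT, Finset.card_erase_of_mem (Finset.mem_univ _), Finset.card_univ, Fintype.card_fin]
  have h4 : ∑ A ∈ T.powerset, oseq (n - A.card)
      = ∑ s ∈ Finset.range n, (n - 1).choose s * oseq (n - s) := by
    have := Finset.sum_powerset_apply_card (fun s => oseq (n - s)) (x := T)
    rw [hTcard] at this
    have hr : n - 1 + 1 = n := by omega
    rw [hr] at this
    simpa [smul_eq_mul] using this
  omega

end count

section AlgebraPart
open PowerSeries Nat


noncomputable def egf (f : ℕ → ℚ) : ℚ⟦X⟧ := PowerSeries.mk fun k => f k / k !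

lemma coeff_egf (f : ℕ → ℚ) (n : ℕ) : coeff n (egf f) = f n / n ! := coeff_mk _ _

lemma exp_eq_egf : exp ℚ = egf (fun _ => 1) := by
  ext n
  rw [coeff_exp, coeff_egf, Algebra.algebraMap_self_apply, one_div]

lemma egf_mul_coeff (f g : ℕ → ℚ) (n : ℕ) :
    (n ! : ℚ) * coeff n (egf f * egf g) =
    ∑ k ∈ Finset.range (n + 1), (n.choose k : ℚ) * f k * g (n - k) := by
  rw [coeff_mul, Finset.Nat.sum_antidiagonal_eq_sum_range_succ_mk, Finset.mul_sum]
  refine Finset.sum_congr rfl fun k hk => ?_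
  rw [coeff_egf, coeff_egf]
  have hk' : k ≤ n := by rw [Finset.mem_range] at hk; omega
  rw [Nat.cast_choose ℚ hk']
  have h1 : (k ! : ℚ) ≠ 0 := Nat.cast_ne_zero.mpr (Nat.factorial_ne_zero k)
  have h2 : ((n - k)! : ℚ) ≠ 0 := Nat.cast_ne_zero.mpr (Nat.factorial_ne_zero _)
  field_simp

lemma egf_deriv (f : ℕ → ℚ) : d⁄dX ℚ (egf f) = egf (fun k => f (k + 1)) := by
  ext n
  rw [coeff_derivative, coeff_egf, coeff_egf, Nat.factorial_succ]
  have h1 : (n ! : ℚ) ≠ 0 := Nat.cast_ne_zero.mpr (Nat.factorial_ne_zero n)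
  have h2 : ((n : ℚ) + 1) ≠ 0 := by positivity
  push_cast
  field_simp

lemma exp_mul_coeff (H : ℚ⟦X⟧) (n : ℕ) :
    (n ! : ℚ) * coeff n (exp ℚ * H) =
    ∑ m ∈ Finset.range (n + 1), (n.choose m : ℚ) * ((m ! : ℚ) * coeff m H) := by
  rw [coeff_mul, Finset.Nat.sum_antidiagonal_eq_sum_range_succ_mk,
    ← Finset.sum_range_reflect, Finset.mul_sum]
  simp only [Nat.succ_sub_one]
  refine Finset.sum_congr rfl fun k hk => ?_
  have hk' : k ≤ n := by rw [Finset.mem_range] at hk; omega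
  have h1 : n - (n - k) = k := by omega
  rw [coeff_exp, Algebra.algebraMap_self_apply, h1, Nat.cast_choose ℚ hk']
  have h2 : (k ! : ℚ) ≠ 0 := Nat.cast_ne_zero.mpr (Nat.factorial_ne_zero k)
  have h3 : ((n - k)! : ℚ) ≠ 0 := Nat.cast_ne_zero.mpr (Nat.factorial_ne_zero _)
  field_simp

lemma exp_ne_zero' : (exp ℚ : ℚ⟦X⟧) ≠ 0 := by
  intro h
  have : constantCoeff (exp ℚ) = 0 := by rw [h, map_zero]
  rw [constantCoeff_exp] at this
  exact one_ne_zero this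

lemma deriv_exp' : d⁄dX ℚ (exp ℚ) = exp ℚ := by
  rw [exp_eq_egf, egf_deriv]

lemma eq_exp_of_deriv (f : ℚ⟦X⟧) (hd : d⁄dX ℚ f = f) (h0 : constantCoeff f = 1) :
    f = exp ℚ := by
  ext n
  induction n with
  | zero =>
    rw [coeff_zero_eq_constantCoeff_apply, coeff_zero_eq_constantCoeff_apply, h0,
      constantCoeff_exp]
  | succ n ih =>
    have h := congrArg (coeff n) hd
    rw [coeff_derivative] at h
    have hne : ((n : ℚ) + 1) ≠ 0 := by positivity
    have hex : coeff (n + 1) (exp ℚ) * ((n : ℚ) + 1) = coeff n (exp ℚ) := by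
      rw [coeff_exp, coeff_exp, Algebra.algebraMap_self_apply, Algebra.algebraMap_self_apply,
        Nat.factorial_succ]
      have h1 : (n ! : ℚ) ≠ 0 := Nat.cast_ne_zero.mpr (Nat.factorial_ne_zero n)
      push_cast
      field_simp
    have := h.trans (ih.trans hex.symm)
    exact mul_right_cancel₀ hne this

lemma key_algebra (e o : ℕ → ℚ) (he0 : e 0 = 1) (ho0 : o 0 = 0)
    (hrec1 : ∀ n, 0 < n → o n + e n =
      ∑ s ∈ Finset.range (n + 1), (n.choose s : ℚ) * e (n - s))
    (hrec2 : ∀ n, 0 < n → e n + o n =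
      ∑ s ∈ Finset.range n, ((n - 1).choose s : ℚ) * o (n - s))
    (b : ℕ → ℚ) (hb : ∀ n, b n = e n + o n) (n : ℕ) :
    2 * (∑ k ∈ Finset.range (n + 1), (n.choose k : ℚ) * b k * b (n - k))
      - ∑ m ∈ Finset.range (n + 1), (n.choose m : ℚ) *
          ∑ k ∈ Finset.range (m + 1), (m.choose k : ℚ) * b k * b (m - k) = 1 := by
  set E := egf e with hE
  set O := egf o with hO
  set B := egf b with hB
  set X := exp ℚ with hX
  have hfac : ∀ m : ℕ, ((m ! : ℚ)) ≠ 0 := fun m => Nat.cast_ne_zero.mpr (Nat.factorial_ne_zero m)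
  -- B = E + O
  have hBEO : B = E + O := by
    ext k
    rw [hB, coeff_egf, map_add, coeff_egf, coeff_egf, hb, _root_.add_div]
  -- O + E = exp * E
  have hOE : O + E = X * E := by
    ext k
    apply mul_left_cancel₀ (hfac k)
    rw [hX, exp_mul_coeff]
    have hco : ∀ m : ℕ, (m ! : ℚ) * coeff m E = e m := by
      intro m
      rw [hE, coeff_egf]
      field_simp
    rw [map_add, hO, hE, coeff_egf, coeff_egf, mul_add]
    rw [mul_div_cancel₀ _ (hfac k), mul_div_cancel₀ _ (hfac k)]
    have : ∑ m ∈ Finset.range (k + 1), (k.choose m : ℚ) * ((m ! : ℚ) * coeff m E)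
        = ∑ m ∈ Finset.range (k + 1), (k.choose m : ℚ) * e m := by
      refine Finset.sum_congr rfl fun m _ => by rw [hco]
    rw [this]
    rcases Nat.eq_zero_or_pos k with rfl | hk
    · simp [ho0, he0]
    · rw [hrec1 k hk,
        ← Finset.sum_range_reflect (fun m => (k.choose m : ℚ) * e m) (k + 1)]
      refine Finset.sum_congr rfl fun s hs => ?_
      have hs' : s ≤ k := by rw [Finset.mem_range] at hs; omega
      simp only [Nat.add_sub_cancel]
      rw [Nat.choose_symm hs']
  -- E' + O' = exp * O'
  have hdEO : d⁄dX ℚ E + d⁄dX ℚ O = X * d⁄dX ℚ O := by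
    rw [hE, hO, egf_deriv, egf_deriv, hX]
    ext k
    apply mul_left_cancel₀ (hfac k)
    rw [exp_mul_coeff, map_add, coeff_egf, coeff_egf, mul_add,
      mul_div_cancel₀ _ (hfac k), mul_div_cancel₀ _ (hfac k)]
    have hsum : ∑ m ∈ Finset.range (k + 1),
        (k.choose m : ℚ) * ((m ! : ℚ) * coeff m (egf fun j => o (j + 1)))
        = ∑ m ∈ Finset.range (k + 1), (k.choose m : ℚ) * o (m + 1) :=
      Finset.sum_congr rfl fun m _ => by
        rw [coeff_egf, mul_div_cancel₀ _ (hfac m)]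
    rw [hsum]
    have hr := hrec2 (k + 1) (Nat.succ_pos k)
    rw [Nat.add_sub_cancel] at hr
    rw [hr, ← Finset.sum_range_reflect (fun m => (k.choose m : ℚ) * o (m + 1)) (k + 1)]
    refine Finset.sum_congr rfl fun s hs => ?_
    have hs' : s ≤ k := by rw [Finset.mem_range] at hs; omega
    simp only [Nat.add_sub_cancel]
    rw [Nat.choose_symm hs', show k + 1 - s = k - s + 1 by omega]
  -- algebra
  have hXne : X ≠ 0 := hX ▸ exp_ne_zero'
  have hDexp : d⁄dX ℚ X = X := hX ▸ deriv_exp'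
  have hBX : B = X * E := by rw [hBEO]; linear_combination hOE
  have hO' : O = X * E - E := by linear_combination hOE
  have hDOeq : d⁄dX ℚ O = X * E + X * d⁄dX ℚ E - d⁄dX ℚ E := by
    rw [hO', map_sub, Derivation.leibniz, hDexp, smul_eq_mul, smul_eq_mul]
    ring
  have eq2 : X * (E + d⁄dX ℚ E) = X * (X * E + X * d⁄dX ℚ E - d⁄dX ℚ E) := by
    have h := hdEO
    rw [hDOeq] at h
    linear_combination h
  have eq3 : E + d⁄dX ℚ E = X * E + X * d⁄dX ℚ E - d⁄dX ℚ E :=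
    mul_left_cancel₀ hXne eq2
  have hstar : (2 - X) * d⁄dX ℚ E = (X - 1) * E := by linear_combination eq3
  have hDB : d⁄dX ℚ B = X * E + X * d⁄dX ℚ E := by
    rw [hBX, Derivation.leibniz, hDexp, smul_eq_mul, smul_eq_mul]
    ring
  have hstar2 : (2 - X) * d⁄dX ℚ B = B := by
    linear_combination (2 - X) * hDB + X * hstar - hBX
  have hD2 : d⁄dX ℚ (2 : ℚ⟦X⟧) = 0 := by
    rw [show (2 : ℚ⟦X⟧) = PowerSeries.C 2 from (map_ofNat (PowerSeries.C) 2).symm,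
      derivative_C]
  have hDG : d⁄dX ℚ (B * B * (2 - X)) = B * B * (2 - X) := by
    have hBB : d⁄dX ℚ (B * B) = 2 * B * d⁄dX ℚ B := by
      rw [Derivation.leibniz]; simp only [smul_eq_mul]; ring
    calc d⁄dX ℚ (B * B * (2 - X))
        = (B * B) * d⁄dX ℚ (2 - X) + (2 - X) * d⁄dX ℚ (B * B) := by
          rw [Derivation.leibniz]; simp only [smul_eq_mul]
      _ = (B * B) * (-X) + (2 - X) * (2 * B * d⁄dX ℚ B) := by
          rw [hBB, map_sub, hD2, hDexp]; ring
      _ = -(B * B * X) + 2 * B * ((2 - X) * d⁄dX ℚ B) := by ring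
      _ = -(B * B * X) + 2 * B * B := by rw [hstar2]
      _ = B * B * (2 - X) := by ring
  have hG0 : constantCoeff (B * B * (2 - X)) = 1 := by
    have hb0 : constantCoeff B = 1 := by
      rw [hB, ← coeff_zero_eq_constantCoeff_apply, coeff_egf]
      simp [hb, he0, ho0]
    have hX0 : constantCoeff X = 1 := hX ▸ constantCoeff_exp
    rw [map_mul, map_mul, hb0, map_sub, hX0, map_ofNat]
    norm_num
  have hGexp : B * B * (2 - X) = X := hX ▸ eq_exp_of_deriv _ (hX ▸ hDG) (hX ▸ hG0)
  have hkey : B * B + B * B = X + X * (B * B) := by linear_combination hGexp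
  -- extract coefficients
  have hS1 : ∀ m : ℕ, (m ! : ℚ) * coeff m (B * B)
      = ∑ k ∈ Finset.range (m + 1), (m.choose k : ℚ) * b k * b (m - k) := fun m => by
    rw [hB]; exact egf_mul_coeff b b m
  have hXc : (n ! : ℚ) * coeff n X = 1 := by
    rw [hX, coeff_exp, Algebra.algebraMap_self_apply, mul_one_div, div_self (hfac n)]
  have hc := congrArg (fun F => (n ! : ℚ) * coeff n F) hkey
  simp only [map_add] at hc
  rw [mul_add, mul_add, hS1 n, hXc] at hc
  have hsum2 : ∑ m ∈ Finset.range (n + 1), (n.choose m : ℚ) *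
      ∑ k ∈ Finset.range (m + 1), (m.choose k : ℚ) * b k * b (m - k)
      = (n ! : ℚ) * coeff n (X * (B * B)) := by
    rw [hX, exp_mul_coeff]
    exact Finset.sum_congr rfl fun m _ => by rw [hS1 m]
  linear_combination hc - hsum2

end AlgebraPart

/-- The coefficient-wise form of `B(x)² (2 - eˣ) = eˣ` where
`B(x) = ∑ bₙ xⁿ/n!`: for every `n ≥ 1`,
`2 ∑ C(n,k) b_k b_{n-k} - ∑_m C(n,m) ∑_k C(m,k) b_k b_{m-k} = 1`. -/
theorem bseq_convolution_identity (n : ℕ) (hn : 1 ≤ n) :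
    (2 : ℤ) * ∑ k ∈ Finset.range (n + 1),
        (n.choose k : ℤ) * bseq k * bseq (n - k) -
      ∑ m ∈ Finset.range (n + 1), (n.choose m : ℤ) *
        ∑ k ∈ Finset.range (m + 1), (m.choose k : ℤ) * bseq k * bseq (m - k)
      = 1 := by
  have halg := key_algebra (fun k => (eseq k : ℚ)) (fun k => (oseq k : ℚ))
    (by beta_reduce; exact_mod_cast eseq_zero) (by beta_reduce; exact_mod_cast oseq_zero)
    (fun m hm => by beta_reduce; exact_mod_cast oseq_rec hm)
    (fun m hm => by beta_reduce; exact_mod_cast eseq_rec hm)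
    (fun k => (bseq k : ℚ)) (fun k => by beta_reduce; exact_mod_cast oddEven_split k) n
  exact_mod_cast halg
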